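/- arXiv:2210.16885 — 7 statements merged into one kernel-verified Lean document; each statement's English description precedes it below -/
import Mathlib

section
/- A quasi-choice correspondence c over a finite set X is freely rationalizable (by some arbitrary binary relation) if and only if c satisfies Axiom α (if x ∈ A ⊆ B and x ∈ c(B) then x ∈ c(A)) and Axiom γ (if x ∈ c(A) and x ∈ c(B) then x ∈ c(A ∪ B)). -/
/-- `r` rationalizes the quasi-choice `c`: `c A` is the set of `r`-maximal elements of `A`. -/
def Rationalizes {X : Type*} (r : X → X → Prop) (c : Set X → Set X) : Prop :=
  ∀ A : Set X, c A = {a ∈ A | ∀ b ∈ A, ¬ r b a}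

/-- `c` is freely rationalizable (a ballot): rationalized by an arbitrary binary relation. -/
def FreelyRat {X : Type*} (c : Set X → Set X) : Prop :=
  ∃ r : X → X → Prop, Rationalizes r c

/-- `c` is asymmetrically rationalizable. -/
def AsymRat {X : Type*} (c : Set X → Set X) : Prop :=
  ∃ r : X → X → Prop, (∀ a b, r a b → ¬ r b a) ∧ Rationalizes r c

/-- Contractiveness: `c` is a quasi-choice. -/
def IsQuasiChoice {X : Type*} (c : Set X → Set X) : Prop :=
  ∀ A : Set X, c A ⊆ A

/-- Axiom α (Chernoff, Standard Contraction Consistency). -/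
def AxiomAlpha {X : Type*} (c : Set X → Set X) : Prop :=
  ∀ ⦃A B : Set X⦄ ⦃x : X⦄, A ⊆ B → x ∈ A → x ∈ c B → x ∈ c A

/-- Axiom γ (Standard Expansion Consistency). -/
def AxiomGamma {X : Type*} (c : Set X → Set X) : Prop :=
  ∀ ⦃A B : Set X⦄ ⦃x : X⦄, x ∈ c A → x ∈ c B → x ∈ c (A ∪ B)

/-- A liberal representation of `c` by the family of ballots `v`. -/
def IsLiberalRep {X : Type*} (c : Set X → Set X) {k : ℕ} (v : Fin k → Set X → Set X) : Prop :=
  (∀ i, FreelyRat (v i)) ∧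
    ∀ A : Set X, ∀ x ∈ A, (x ∈ c A ↔ ∃ i, x ∈ v i A)

/-- A democratic representation of `c` by the family of ballots `v`:
an item is chosen iff more than half of the ballots endorse it. -/
def IsDemRep {X : Type*} (c : Set X → Set X) {k : ℕ} (v : Fin k → Set X → Set X) : Prop :=
  (∀ i, FreelyRat (v i)) ∧
    ∀ A : Set X, ∀ x ∈ A, (x ∈ c A ↔ 2 * Nat.card {i : Fin k // x ∈ v i A} > k)

/-- The liberal number of `c`: the minimum size of a liberal representation (⊤ if none). -/
noncomputable def lib {X : Type*} (c : Set X → Set X) : ℕ∞ :=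
  sInf {n : ℕ∞ | ∃ (k : ℕ) (v : Fin k → Set X → Set X), 0 < k ∧ IsLiberalRep c v ∧ n = (k : ℕ∞)}

/-- The democratic number of `c`: the minimum size of a democratic representation (⊤ if none). -/
noncomputable def dem {X : Type*} (c : Set X → Set X) : ℕ∞ :=
  sInf {n : ℕ∞ | ∃ (k : ℕ) (v : Fin k → Set X → Set X), 0 < k ∧ IsDemRep c v ∧ n = (k : ℕ∞)}

/-- `c` is `s`-majoritarian: some finite family of ballots selects exactly the items
endorsed by a share of ballots strictly larger than `s`. -/
def Majoritarian {X : Type*} (s : ℝ) (c : Set X → Set X) : Prop :=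
  ∃ (k : ℕ) (v : Fin k → Set X → Set X), 0 < k ∧ (∀ i, FreelyRat (v i)) ∧
    ∀ A : Set X, ∀ x ∈ A,
      (x ∈ c A ↔ (Nat.card {i : Fin k // x ∈ v i A} : ℝ) / (k : ℝ) > s)

/-!
The rationalizing relation is the one revealed on two-element menus: `b` defeats `a` iff
`a ∉ c {b, a}`. Axiom α says that a chosen `x ∈ c A` survives in every pair `{b, x} ⊆ A`;
conversely, if `x` survives in each such pair, Axiom γ glues these finitely many pairs back
into `A = ⋃ b ∈ A, {b, x}`.
-/

section

variable {X : Type*} {c : Set X → Set X}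

theorem AxiomAlpha.of_rationalizes {r : X → X → Prop} (hr : Rationalizes r c) : AxiomAlpha c := by
  intro A B x hAB hxA hxB
  rw [hr] at hxB ⊢
  exact ⟨hxA, fun b hb => hxB.2 b (hAB hb)⟩

theorem AxiomGamma.of_rationalizes {r : X → X → Prop} (hr : Rationalizes r c) : AxiomGamma c := by
  intro A B x hxA hxB
  rw [hr] at hxA hxB ⊢
  exact ⟨Or.inl hxA.1, fun b hb => hb.elim (hxA.2 b) (hxB.2 b)⟩

theorem AxiomGamma.mem_biUnion (hg : AxiomGamma c) {ι : Type*} {s : Finset ι} (hs : s.Nonempty)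
    {f : ι → Set X} {x : X} (h : ∀ i ∈ s, x ∈ c (f i)) : x ∈ c (⋃ i ∈ s, f i) := by
  classical
  induction hs using Finset.Nonempty.cons_induction with
  | singleton a =>
    rw [Finset.set_biUnion_singleton]
    exact h a (Finset.mem_singleton_self a)
  | cons a s ha hs ih =>
    rw [Finset.cons_eq_insert, Finset.set_biUnion_insert]
    simp only [Finset.cons_eq_insert, Finset.mem_insert, forall_eq_or_imp] at h
    exact hg h.1 (ih h.2)

def pairDefeats (c : Set X → Set X) (b a : X) : Prop :=
  a ∉ c {b, a}

theorem Set.biUnion_pair_right {A : Set X} {x : X} (hx : x ∈ A) : ⋃ b ∈ A, ({b, x} : Set X) = A := by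
  ext y
  simp only [Set.mem_iUnion, Set.mem_insert_iff, Set.mem_singleton_iff, exists_prop]
  exact ⟨fun ⟨b, hb, hy⟩ => hy.elim (· ▸ hb) (· ▸ hx), fun hy => ⟨y, hy, Or.inl rfl⟩⟩

theorem rationalizes_pairDefeats [Finite X] (hq : IsQuasiChoice c) (ha : AxiomAlpha c)
    (hg : AxiomGamma c) : Rationalizes (pairDefeats c) c := by
  intro A
  ext x
  simp only [pairDefeats, Set.mem_ofPred_eq, not_not]
  constructor
  · intro hx
    have hxA := hq A hx
    exact ⟨hxA, fun b hb => ha (Set.pair_subset hb hxA) (Set.mem_insert_of_mem b rfl) hx⟩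
  · rintro ⟨hxA, hpair⟩
    have hA := Set.toFinite A
    have := hg.mem_biUnion (s := hA.toFinset) ⟨x, hA.mem_toFinset.2 hxA⟩
      (f := fun b => {b, x}) fun b hb => hpair b (hA.mem_toFinset.1 hb)
    simpa only [Set.Finite.mem_toFinset, Set.biUnion_pair_right hxA] using this

end

theorem stmt2 {X : Type*} [Fintype X] (c : Set X → Set X) (hq : IsQuasiChoice c) :
    FreelyRat c ↔ AxiomAlpha c ∧ AxiomGamma c :=
  ⟨fun ⟨_, hr⟩ => ⟨.of_rationalizes hr, .of_rationalizes hr⟩,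
    fun ⟨ha, hg⟩ => ⟨_, rationalizes_pairDefeats hq ha hg⟩⟩
end

section
/- Every quasi-choice correspondence over a finite set that satisfies Axiom α is 0-majoritarian, i.e., it equals the union of a finite family of freely rationalizable quasi-choices (ballots). -/
/-!
For each menu `B`, the ballot `A ↦ {a ∈ A | A ⊆ B ∧ a ∈ c B}` only speaks on submenus of `B`,
where it offers what `c` chose from `B`; it is rationalized by letting `b` defeat `a` whenever
`b ∉ B` or `a ∉ c B`. By Axiom α each of these ballots selects from `A` a subset of `c A`, and the
ballot of `B = A` selects all of `c A`, so `c` is the union of the finitely many ballots.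
-/

section MenuBallot

variable {X : Type*}

def menuBallot (c : Set X → Set X) (B : Set X) (A : Set X) : Set X :=
  {a ∈ A | A ⊆ B ∧ a ∈ c B}

theorem freelyRat_menuBallot (c : Set X → Set X) (B : Set X) : FreelyRat (menuBallot c B) := by
  refine ⟨fun b a => b ∉ B ∨ a ∉ c B, fun A => ?_⟩
  ext a
  simp only [menuBallot, Set.mem_ofPred_eq, not_or, not_not]
  constructor
  · rintro ⟨haA, hAB, hac⟩
    exact ⟨haA, fun b hb => ⟨hAB hb, hac⟩⟩
  · rintro ⟨haA, h⟩
    exact ⟨haA, fun b hb => (h b hb).1, (h a haA).2⟩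

theorem menuBallot_subset (c : Set X → Set X) (ha : AxiomAlpha c) (A B : Set X) :
    menuBallot c B A ⊆ c A :=
  fun _ ⟨hxA, hAB, hxc⟩ => ha hAB hxA hxc

theorem menuBallot_self (c : Set X → Set X) (hq : IsQuasiChoice c) (A : Set X) :
    menuBallot c A A = c A :=
  Set.ext fun _ => ⟨fun h => h.2.2, fun h => ⟨hq A h, subset_rfl, h⟩⟩

theorem eq_iUnion_menuBallot (c : Set X → Set X) (hq : IsQuasiChoice c) (ha : AxiomAlpha c)
    (A : Set X) : c A = ⋃ B, menuBallot c B A :=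
  subset_antisymm (menuBallot_self c hq A ▸ Set.subset_iUnion (fun B => menuBallot c B A) A)
    (Set.iUnion_subset fun B => menuBallot_subset c ha A B)

end MenuBallot

theorem stmt7 {X : Type*} [Fintype X] (c : Set X → Set X) (hq : IsQuasiChoice c)
    (ha : AxiomAlpha c) :
    ∃ (k : ℕ) (v : Fin k → Set X → Set X), 0 < k ∧ (∀ i, FreelyRat (v i)) ∧
      ∀ A : Set X, c A = ⋃ i, v i A := by
  let e := (Fintype.equivFin (Set X)).symm
  refine ⟨_, fun i => menuBallot c (e i), Fintype.card_pos, fun i => freelyRat_menuBallot c _,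
    fun A => ?_⟩
  rw [eq_iUnion_menuBallot c hq ha A]
  exact (e.iSup_comp (g := fun B => menuBallot c B A)).symm
end

section
/- For a quasi-choice correspondence c over a finite set X and any rational share s ∈ [0,1), the following are equivalent: (i) c satisfies Axiom α; (ii) c is s-majoritarian for some rational s ∈ [0,1); (iii) c is s-majoritarian for every rational s ∈ [0,1). -/
/-!
Every ballot satisfies α, and α survives vote counting because a ballot that endorses `x` in
`B` still endorses it in any `A ⊆ B` containing it; hence majoritarian choices satisfy α.

Conversely, under α the choice `c` is the union of the ballots `v_A`, `A ⊆ X`, where `v_A B`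
is `c A ∩ B` when `B ⊆ A` and empty otherwise. For `k` such ballots and any `s ∈ [0, 1)`,
add `a = ⌊s k / (1 - s)⌋₊` ballots endorsing everything: an item endorsed by `t` of the `v_A`
gets share `(t + a) / (k + a)`, which exceeds `s` exactly when `t ≥ 1`.
-/

section

variable {X : Type*}

def maximalBy (r : X → X → Prop) (A : Set X) : Set X :=
  {a ∈ A | ∀ b ∈ A, ¬ r b a}

lemma freelyRat_maximalBy (r : X → X → Prop) : FreelyRat (maximalBy r) :=
  ⟨r, fun _ => rfl⟩

@[simp]
lemma maximalBy_bot (A : Set X) : maximalBy ⊥ A = A := by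
  ext; simp [maximalBy]

lemma FreelyRat.axiomAlpha {v : Set X → Set X} (hv : FreelyRat v) : AxiomAlpha v := by
  obtain ⟨r, hr⟩ := hv
  intro A B x hAB hxA hxB
  rw [hr] at hxB ⊢
  exact ⟨hxA, fun b hb => hxB.2 b (hAB hb)⟩

lemma Majoritarian.axiomAlpha {s : ℝ} {c : Set X → Set X} (h : Majoritarian s c) :
    AxiomAlpha c := by
  obtain ⟨k, v, -, hv, hrep⟩ := h
  intro A B x hAB hxA hxB
  rw [hrep B x (hAB hxA)] at hxB
  rw [hrep A x hxA]
  have hcard : Nat.card {i : Fin k // x ∈ v i B} ≤ Nat.card {i : Fin k // x ∈ v i A} :=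
    Nat.card_le_card_of_injective _
      (Subtype.impEmbedding _ _ fun i => (hv i).axiomAlpha hAB hxA).injective
  exact hxB.trans_le (by gcongr)

lemma majoritarian_of_finite {ι : Type*} [Finite ι] [Nonempty ι] {s : ℝ}
    {c : Set X → Set X} (v : ι → Set X → Set X) (hv : ∀ i, FreelyRat (v i))
    (hrep : ∀ A : Set X, ∀ x ∈ A,
      (x ∈ c A ↔ (Nat.card {i // x ∈ v i A} : ℝ) / Nat.card ι > s)) :
    Majoritarian s c := by
  let e := Finite.equivFin ι
  refine ⟨Nat.card ι, v ∘ e.symm, Nat.card_pos, fun j => hv _, fun A x hx => ?_⟩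
  have hcount : Nat.card {i // x ∈ v i A} = Nat.card {j // x ∈ (v ∘ e.symm) j A} :=
    Nat.card_congr (e.subtypeEquiv fun i => by simp)
  rw [hrep A x hx, hcount]

lemma lt_share_iff {s : ℝ} (hs0 : 0 ≤ s) (hs1 : s < 1) {k : ℕ} (hk : 0 < k) (t : ℕ) :
    s < ((t + ⌊s * k / (1 - s)⌋₊ : ℕ) : ℝ) / ((k + ⌊s * k / (1 - s)⌋₊ : ℕ) : ℝ) ↔ 0 < t := by
  set a := ⌊s * k / (1 - s)⌋₊
  have h1s : 0 < 1 - s := sub_pos.mpr hs1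
  have ha_le : (a : ℝ) * (1 - s) ≤ s * k :=
    (le_div_iff₀ h1s).mp (Nat.floor_le (by positivity))
  have ha_lt : s * k < (a + 1) * (1 - s) :=
    (div_lt_iff₀ h1s).mp (Nat.lt_floor_add_one _)
  rw [lt_div_iff₀ (by positivity)]
  push_cast
  constructor
  · intro h
    by_contra ht
    rw [Nat.pos_iff_ne_zero, not_not] at ht
    subst ht
    push_cast at h
    nlinarith
  · intro ht
    have : (1 : ℝ) ≤ t := by exact_mod_cast ht
    nlinarith

lemma majoritarian_of_liberal {ι : Type*} [Finite ι] [Nonempty ι] {s : ℝ} (hs0 : 0 ≤ s)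
    (hs1 : s < 1) {c : Set X → Set X} (v : ι → Set X → Set X) (hv : ∀ i, FreelyRat (v i))
    (hrep : ∀ A : Set X, ∀ x ∈ A, (x ∈ c A ↔ ∃ i, x ∈ v i A)) :
    Majoritarian s c := by
  set a := ⌊s * Nat.card ι / (1 - s)⌋₊
  let w : ι ⊕ Fin a → Set X → Set X := Sum.elim v fun _ => maximalBy ⊥
  have hw : ∀ u, FreelyRat (w u) := by
    rintro (i | _)
    exacts [hv i, freelyRat_maximalBy ⊥]
  refine majoritarian_of_finite w hw fun A x hx => ?_
  have hcount : Nat.card {u // x ∈ w u A} = Nat.card {i // x ∈ v i A} + a := by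
    rw [Nat.card_congr Equiv.subtypeSum, Nat.card_sum]
    simp [w, hx]
  rw [hrep A x hx, hcount, Nat.card_sum, Nat.card_eq_fintype_card (α := Fin a),
    Fintype.card_fin, gt_iff_lt, lt_share_iff hs0 hs1 Nat.card_pos, Nat.card_pos_iff]
  simp [Subtype.finite]

/-- The ballot `B ↦ c A ∩ B` for `B ⊆ A` (and `∅` otherwise). -/
def restrictBallot (c : Set X → Set X) (A : Set X) : Set X → Set X :=
  maximalBy fun b x => b ∉ A ∨ x ∉ c A

lemma AxiomAlpha.mem_iff_exists_restrictBallot {c : Set X → Set X} (hα : AxiomAlpha c)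
    {B : Set X} {x : X} (hx : x ∈ B) : x ∈ c B ↔ ∃ A, x ∈ restrictBallot c A B := by
  simp only [restrictBallot, maximalBy, Set.mem_ofPred_eq, not_or, not_not]
  constructor
  · exact fun hxc => ⟨B, hx, fun b hb => ⟨hb, hxc⟩⟩
  · rintro ⟨A, -, hA⟩
    exact hα (fun b hb => (hA b hb).1) hx (hA x hx).2

lemma AxiomAlpha.majoritarian [Finite X] {c : Set X → Set X} (hα : AxiomAlpha c) {s : ℝ}
    (hs0 : 0 ≤ s) (hs1 : s < 1) : Majoritarian s c :=
  majoritarian_of_liberal hs0 hs1 (restrictBallot c) (fun _ => freelyRat_maximalBy _)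
    fun _ _ hx => hα.mem_iff_exists_restrictBallot hx

end

theorem stmt8_general {X : Type*} [Fintype X] (c : Set X → Set X) :
    (AxiomAlpha c ↔ ∃ s : ℚ, 0 ≤ s ∧ s < 1 ∧ Majoritarian (s : ℝ) c) ∧
    (AxiomAlpha c ↔ ∀ s : ℚ, 0 ≤ s → s < 1 → Majoritarian (s : ℝ) c) := by
  have hmaj : AxiomAlpha c → ∀ s : ℚ, 0 ≤ s → s < 1 → Majoritarian (s : ℝ) c :=
    fun hα s hs0 hs1 => hα.majoritarian (by exact_mod_cast hs0) (by exact_mod_cast hs1)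
  refine ⟨⟨fun hα => ⟨0, le_rfl, zero_lt_one, hmaj hα 0 le_rfl zero_lt_one⟩, ?_⟩,
    ⟨hmaj, fun h => (h 0 le_rfl zero_lt_one).axiomAlpha⟩⟩
  rintro ⟨s, -, -, h⟩
  exact h.axiomAlpha

theorem stmt8 {X : Type*} [Fintype X] (c : Set X → Set X) (hq : IsQuasiChoice c) :
    (AxiomAlpha c ↔ ∃ s : ℚ, 0 ≤ s ∧ s < 1 ∧ Majoritarian (s : ℝ) c) ∧
    (AxiomAlpha c ↔ ∀ s : ℚ, 0 ≤ s → s < 1 → Majoritarian (s : ℝ) c) :=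
  stmt8_general c
end

section
/- If a quasi-choice c is s-majoritarian for some rational s ∈ (0,1) witnessed by p ballots with p·s ∈ ℕ and s < (p−1)/p, then for any rational s' with 0 < s' < s, c is also s'-majoritarian; in particular, adding hypercritical ballots (empty quasi-choices) to a t-majoritarian family in the ratio q = p(t/s − 1) converts it into an s-majoritarian family. -/
/-!
Write `m = p s ∈ ℕ`. An item is chosen by the `p` ballots iff more than `m` of them endorse it.
Padding the family with `q` hypercritical ballots changes no endorsement count, only the
denominator, so the padded family is `s'`-majoritarian as soon as `⌊s' (p + q)⌋ = m`. Taking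
`p + q = ⌈m / s'⌉` achieves this: it is at least `p` because `s' < s`, and
`m ≤ s' (p + q) < m + s' < m + 1` because `s' < 1`.
-/

theorem Nat.floor_mul_ceil_div_eq {K : Type*} [Field K] [LinearOrder K] [IsStrictOrderedRing K]
    [FloorSemiring K] {t : K} (ht0 : 0 < t) (ht1 : t < 1) (m : ℕ) :
    ⌊t * ⌈m / t⌉₊⌋₊ = m := by
  have hle : (m : K) / t ≤ ⌈(m : K) / t⌉₊ := Nat.le_ceil _
  have hlt : (⌈(m : K) / t⌉₊ : K) < m / t + 1 := Nat.ceil_lt_add_one (by positivity)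
  rw [Nat.floor_eq_iff (by positivity)]
  constructor
  · rwa [div_le_iff₀ ht0, mul_comm] at hle
  · calc t * ⌈(m : K) / t⌉₊ < t * (m / t + 1) := mul_lt_mul_of_pos_left hlt ht0
      _ = m + t := by field_simp
      _ < m + 1 := by linarith

section Ballots

variable {X : Type*}

def hypercritical (X : Type*) : Set X → Set X := fun _ => ∅

theorem freelyRat_hypercritical : FreelyRat (hypercritical X) :=
  ⟨fun _ _ => True, fun A => Set.ext fun a => by
    simpa [hypercritical] using fun ha => ⟨a, ha⟩⟩

noncomputable def votes {k : ℕ} (v : Fin k → Set X → Set X) (A : Set X) (x : X) : ℕ :=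
  Nat.card {i : Fin k // x ∈ v i A}

theorem votes_append_hypercritical {p : ℕ} (v : Fin p → Set X → Set X) (q : ℕ)
    (A : Set X) (x : X) :
    votes (Fin.append v fun _ : Fin q => hypercritical X) A x = votes v A x := by
  classical
  simp only [votes, Nat.card_eq_fintype_card, Fintype.card_subtype, Finset.card_filter,
    Fin.sum_univ_add, Fin.append_left, Fin.append_right, hypercritical, Set.mem_empty_iff_false,
    if_false, Finset.sum_const_zero, add_zero]

theorem majoritarian_of_votes_gt {c : Set X → Set X} {p m : ℕ} {v : Fin p → Set X → Set X}
    (hball : ∀ i, FreelyRat (v i))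
    (hc : ∀ A : Set X, ∀ x ∈ A, x ∈ c A ↔ m < votes v A x)
    {t : ℝ} (ht : 0 ≤ t) (q : ℕ) (hpq : 0 < p + q) (hfloor : ⌊t * (p + q : ℕ)⌋₊ = m) :
    Majoritarian t c := by
  refine ⟨p + q, Fin.append v fun _ => hypercritical X, hpq, ?_, fun A x hx => ?_⟩
  · exact Fin.addCases (fun i => by simpa using hball i) fun _ => by
      simpa using freelyRat_hypercritical
  · have hk : (0 : ℝ) < (p + q : ℕ) := by exact_mod_cast hpq
    change x ∈ c A ↔ (votes (Fin.append v fun _ => hypercritical X) A x : ℝ) / _ > t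
    rw [votes_append_hypercritical, hc A x hx, gt_iff_lt, lt_div_iff₀ hk, ← Nat.floor_lt
      (mul_nonneg ht hk.le), hfloor]

end Ballots

theorem stmt10_general {X : Type*} (c : Set X → Set X)
    (s : ℚ) (hs1 : s < 1)
    (p : ℕ) (hp : 0 < p) (v : Fin p → Set X → Set X)
    (hball : ∀ i, FreelyRat (v i))
    (hint : ∃ m : ℕ, (p : ℚ) * s = (m : ℚ))
    (hmaj : ∀ A : Set X, ∀ x ∈ A,
      (x ∈ c A ↔ (Nat.card {i : Fin p // x ∈ v i A} : ℚ) / (p : ℚ) > s)) :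
    ∀ s' : ℚ, 0 < s' → s' < s → Majoritarian (s' : ℝ) c := by
  obtain ⟨m, hm⟩ := hint
  intro s' hs'0 hs's
  have hpQ : (0 : ℚ) < p := by exact_mod_cast hp
  have hc : ∀ A : Set X, ∀ x ∈ A, x ∈ c A ↔ m < votes v A x := fun A x hx => by
    rw [hmaj A x hx, gt_iff_lt, lt_div_iff₀ hpQ, mul_comm, hm]
    exact Nat.cast_lt
  have ht0 : (0 : ℝ) < s' := by exact_mod_cast hs'0
  have hp_le : p ≤ ⌈(m : ℝ) / s'⌉₊ := by
    refine Nat.cast_le.mp (le_trans ?_ (Nat.le_ceil _))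
    rw [le_div_iff₀ ht0]
    exact_mod_cast hm ▸ mul_le_mul_of_nonneg_left hs's.le hpQ.le
  obtain ⟨q, hq⟩ := Nat.exists_eq_add_of_le hp_le
  refine majoritarian_of_votes_gt hball hc ht0.le q (by omega) ?_
  rw [← hq]
  exact Nat.floor_mul_ceil_div_eq ht0 (by exact_mod_cast hs's.trans hs1) m

theorem stmt10 {X : Type*} [Fintype X] (c : Set X → Set X) (hq : IsQuasiChoice c)
    (s : ℚ) (hs0 : 0 < s) (hs1 : s < 1)
    (p : ℕ) (hp : 0 < p) (v : Fin p → Set X → Set X)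
    (hball : ∀ i, FreelyRat (v i))
    (hint : ∃ m : ℕ, (p : ℚ) * s = (m : ℚ))
    (hlt : s < ((p : ℚ) - 1) / (p : ℚ))
    (hmaj : ∀ A : Set X, ∀ x ∈ A,
      (x ∈ c A ↔ (Nat.card {i : Fin p // x ∈ v i A} : ℚ) / (p : ℚ) > s)) :
    ∀ s' : ℚ, 0 < s' → s' < s → Majoritarian (s' : ℝ) c :=
  stmt10_general c s hs1 p hp v hball hint hmaj
end

section
/- For every quasi-choice correspondence c over a finite set, dem(c) ≤ 2·lib(c): given a liberal representation of c of size k, adding k neutral ballots (each selecting everything) yields a democratic representation of size 2k. -/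
/-! Pad a liberal representation `v₁, …, v_k` of `c` with `k` neutral ballots. An item `x ∈ A`
then collects `a + k` endorsements out of `2k`, where `a` is the number of `vᵢ` selecting it, and
`a + k > k` exactly when some `vᵢ` selects `x`, i.e. when `x ∈ c A`. -/

theorem Fin.natCard_subtype_add {k m : ℕ} (p : Fin (k + m) → Prop) :
    Nat.card {i // p i} =
      Nat.card {i : Fin k // p (Fin.castAdd m i)} + Nat.card {j : Fin m // p (Fin.natAdd k j)} := by
  classical
  simp only [Nat.card_eq_fintype_card, Fintype.card_subtype, Finset.card_filter, Fin.sum_univ_add]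

theorem freelyRat_id {X : Type*} : FreelyRat (id : Set X → Set X) :=
  ⟨fun _ _ => False, fun A => by simp⟩

theorem IsLiberalRep.isDemRep_append_id {X : Type*} {c : Set X → Set X} {k : ℕ}
    {v : Fin k → Set X → Set X} (hv : IsLiberalRep c v) :
    IsDemRep c (Fin.append v fun _ : Fin k => id) := by
  refine ⟨Fin.addCases (fun i => by rw [Fin.append_left]; exact hv.1 i)
    (fun _ => by rw [Fin.append_right]; exact freelyRat_id), fun A x hx => ?_⟩
  have hcount : Nat.card {i // x ∈ Fin.append v (fun _ : Fin k => id) i A} =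
      Nat.card {i : Fin k // x ∈ v i A} + k := by
    simp only [Fin.natCard_subtype_add, Fin.append_left, Fin.append_right, id, hx,
      Nat.card_eq_fintype_card, Fintype.card_subtype_true, Fintype.card_fin]
  rw [hv.2 A x hx, hcount, ← nonempty_subtype, ← Finite.card_pos_iff]
  omega

theorem dem_le_of_isDemRep {X : Type*} {c : Set X → Set X} {k : ℕ} {v : Fin k → Set X → Set X}
    (hk : 0 < k) (hv : IsDemRep c v) : dem c ≤ k :=
  sInf_le ⟨k, v, hk, hv, rfl⟩

theorem exists_isLiberalRep_of_lib_ne_top {X : Type*} {c : Set X → Set X} (h : lib c ≠ ⊤) :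
    ∃ (k : ℕ) (v : Fin k → Set X → Set X), 0 < k ∧ IsLiberalRep c v ∧ lib c = k := by
  have hne : {n : ℕ∞ | ∃ (k : ℕ) (v : Fin k → Set X → Set X),
      0 < k ∧ IsLiberalRep c v ∧ n = (k : ℕ∞)}.Nonempty :=
    Set.nonempty_iff_ne_empty.2 fun he => h (by rw [lib, he, sInf_empty])
  exact csInf_mem hne

theorem stmt12_general {X : Type*} (c : Set X → Set X) :
    dem c ≤ 2 * lib c := by
  rcases eq_or_ne (lib c) ⊤ with h | h
  · simp [h]
  obtain ⟨k, v, hk, hv, hlib⟩ := exists_isLiberalRep_of_lib_ne_top h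
  calc dem c ≤ (k + k : ℕ) := dem_le_of_isDemRep (by omega) hv.isDemRep_append_id
    _ = 2 * lib c := by rw [hlib]; push_cast; ring

theorem stmt12 {X : Type*} [Fintype X] (c : Set X → Set X) (hq : IsQuasiChoice c) :
    dem c ≤ 2 * lib c :=
  stmt12_general c
end

section
/- For every quasi-choice correspondence c over a finite set, lib(c) ≤ 2^{dem(c) − 1}: given a democratic representation V of c, the family of ballots w_U indexed by subfamilies U ⊆ V with |U| > |V|/2, where w_U(A) = ⋂_{u∈U} u(A), is a liberal representation of c, and the number of such subfamilies is at most 2^{|V|−1}. -/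
/-!
Intersect the ballots of a democratic representation `v` of size `k` over each majority
coalition `U ⊆ v`: an item is chosen by `c` iff its supporters form a majority coalition, iff
some majority coalition endorses it unanimously. Majority coalitions pairwise intersect, so
there are at most `2 ^ (k - 1)` of them.
-/

open Finset

section

variable {X : Type*}

theorem FreelyRat.inter_iInter {ι : Type*} {v : ι → Set X → Set X} (hv : ∀ i, FreelyRat (v i)) :
    FreelyRat (fun A => A ∩ ⋂ i, v i A) := by
  choose r hr using hv
  refine ⟨fun b a => ∃ i, r i b a, fun A => ?_⟩
  ext x
  simp only [fun i => hr i A, Set.mem_inter_iff, Set.mem_iInter, Set.mem_ofPred_eq, not_exists]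
  exact ⟨fun ⟨hxA, hx⟩ => ⟨hxA, fun b hb i => (hx i).2 b hb⟩,
    fun ⟨hxA, hx⟩ => ⟨hxA, fun i => ⟨hxA, fun b hb => hx b hb i⟩⟩⟩

theorem lib_le_card {c : Set X → Set X} {ι : Type*} [Fintype ι] [Nonempty ι]
    {w : ι → Set X → Set X} (hw : ∀ i, FreelyRat (w i))
    (hc : ∀ A : Set X, ∀ x ∈ A, (x ∈ c A ↔ ∃ i, x ∈ w i A)) :
    lib c ≤ Fintype.card ι := by
  let e := Fintype.equivFin ι
  refine sInf_le ⟨_, fun j => w (e.symm j), Fintype.card_pos, ⟨fun j => hw _, fun A x hx => ?_⟩, rfl⟩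
  rw [hc A x hx, e.symm.exists_congr_left]
  simp

theorem exists_isDemRep_of_dem_eq {c : Set X → Set X} {m : ℕ} (h : dem c = m) :
    0 < m ∧ ∃ v : Fin m → Set X → Set X, IsDemRep c v := by
  have hne : {n : ℕ∞ | ∃ (k : ℕ) (v : Fin k → Set X → Set X),
      0 < k ∧ IsDemRep c v ∧ n = (k : ℕ∞)}.Nonempty := by
    by_contra hempty
    rw [Set.not_nonempty_iff_eq_empty] at hempty
    rw [dem, hempty, sInf_empty] at h
    exact ENat.top_ne_natCast m h
  obtain ⟨k, v, hk, hv, hkm⟩ := csInf_mem hne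
  obtain rfl : k = m := by exact_mod_cast hkm.symm.trans h
  exact ⟨hk, v, hv⟩

def majorityCoalitions (k : ℕ) : Finset (Finset (Fin k)) :=
  univ.filter fun U => k < 2 * #U

theorem mem_majorityCoalitions {k : ℕ} {U : Finset (Fin k)} :
    U ∈ majorityCoalitions k ↔ k < 2 * #U := by
  simp [majorityCoalitions]

theorem univ_mem_majorityCoalitions {k : ℕ} (hk : 0 < k) : univ ∈ majorityCoalitions k := by
  rw [mem_majorityCoalitions, card_univ, Fintype.card_fin]
  omega

theorem intersecting_majorityCoalitions (k : ℕ) :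
    (majorityCoalitions k : Set (Finset (Fin k))).Intersecting := by
  intro U hU V hV hUV
  rw [mem_coe, mem_majorityCoalitions] at hU hV
  have := card_union_of_disjoint hUV
  have := (U ∪ V).card_le_univ
  rw [Fintype.card_fin] at this
  omega

theorem card_majorityCoalitions_le (k : ℕ) : #(majorityCoalitions k) ≤ 2 ^ (k - 1) := by
  have h := (intersecting_majorityCoalitions k).card_le
  rw [Fintype.card_finset, Fintype.card_fin] at h
  rcases k with _ | k
  · omega
  · rw [Nat.add_sub_cancel, pow_succ'] at *
    exact Nat.le_of_mul_le_mul_left h two_pos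

theorem IsDemRep.mem_iff_exists_majority {c : Set X → Set X} {k : ℕ}
    {v : Fin k → Set X → Set X} (hv : IsDemRep c v) {A : Set X} {x : X} (hx : x ∈ A) :
    x ∈ c A ↔ ∃ U ∈ majorityCoalitions k, ∀ i ∈ U, x ∈ v i A := by
  classical
  have hsupp : Nat.card {i // x ∈ v i A} = #(univ.filter fun i => x ∈ v i A) := by
    rw [Nat.card_eq_fintype_card, Fintype.card_subtype]
  simp only [hv.2 A x hx, hsupp, gt_iff_lt, mem_majorityCoalitions]
  constructor
  · exact fun h => ⟨_, h, fun i hi => (mem_filter.mp hi).2⟩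
  · rintro ⟨U, hU, hUx⟩
    exact hU.trans_le (Nat.mul_le_mul_left 2 (card_le_card fun i hi => by simpa using hUx i hi))

theorem IsDemRep.lib_le {c : Set X → Set X} {k : ℕ} {v : Fin k → Set X → Set X}
    (hv : IsDemRep c v) (hk : 0 < k) : lib c ≤ ((2 ^ (k - 1) : ℕ) : ℕ∞) := by
  have : Nonempty (majorityCoalitions k) := ⟨⟨_, univ_mem_majorityCoalitions hk⟩⟩
  calc lib c ≤ Fintype.card (majorityCoalitions k) :=
        lib_le_card (w := fun U A => A ∩ ⋂ i : (U : Finset (Fin k)), v i A)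
          (fun _ => FreelyRat.inter_iInter fun i => hv.1 i) fun A x hx => by
            simp [hv.mem_iff_exists_majority hx, hx]
    _ ≤ ((2 ^ (k - 1) : ℕ) : ℕ∞) := by
        rw [Fintype.card_coe]
        exact_mod_cast card_majorityCoalitions_le k

end

theorem stmt13_general {X : Type*} (c : Set X → Set X) :
    ∀ m : ℕ, dem c = (m : ℕ∞) → lib c ≤ ((2 ^ (m - 1) : ℕ) : ℕ∞) := by
  intro m hm
  obtain ⟨hm, v, hv⟩ := exists_isDemRep_of_dem_eq hm
  exact hv.lib_le hm

theorem stmt13 {X : Type*} [Fintype X] (c : Set X → Set X) (hq : IsQuasiChoice c) :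
    ∀ m : ℕ, dem c = (m : ℕ∞) → lib c ≤ ((2 ^ (m - 1) : ℕ) : ℕ∞) :=
  stmt13_general c
end

section
/- For n = 6 and the choice c over X = {0,1,2,3,4,5} defined by c(A) = A ∖ {0} if 0 ∈ A and |A| ≥ 4, and c(A) = A otherwise: c satisfies Axiom α, dem(c) ≤ 5, and lib(c) ≥ 10. -/
open Classical in
/-- The choice over `{0,…,5}` selecting everything except `0` on menus containing `0`
of size at least `4`. -/
noncomputable def c15 : Set (Fin 6) → Set (Fin 6) := fun A =>
  if (0 : Fin 6) ∈ A ∧ 4 ≤ A.ncard then A \ {0} else A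


/-!
Ballots satisfy expansion consistency (Axiom γ): an item a ballot chooses from two menus it also
chooses from their union. For each of the ten pairs `s ⊆ {1,…,5}`, `0` is chosen from the
three-element menu `{0} ∪ s`, hence by some ballot of a liberal representation. A ballot choosing
`0` from `{0} ∪ s` and `{0} ∪ t` with `s ≠ t` would choose it from `{0} ∪ s ∪ t`, which has at least
four elements, where `c15` rejects `0`; so the ten pairs need ten distinct ballots.

For the democratic bound, the `i`-th of five ballots only lets `i + 1` beat `0`. Then `0` survives
in `6 - |A|` of them, a majority exactly when `|A| ≤ 3`.
-/

theorem Rationalizes.axiomGamma {X : Type*} {r : X → X → Prop} {c : Set X → Set X}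
    (h : Rationalizes r c) : AxiomGamma c := by
  intro A B x hxA hxB
  rw [h] at hxA hxB ⊢
  refine ⟨Or.inl hxA.1, fun b hb => ?_⟩
  rcases hb with hb | hb
  exacts [hxA.2 b hb, hxB.2 b hb]

theorem FreelyRat.axiomGamma {X : Type*} {c : Set X → Set X} (h : FreelyRat c) :
    AxiomGamma c :=
  let ⟨_, hr⟩ := h; hr.axiomGamma

theorem IsLiberalRep.card_le {X : Type*} {c : Set X → Set X} {k : ℕ}
    {v : Fin k → Set X → Set X} (hv : IsLiberalRep c v) {ι : Type*} [Fintype ι]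
    {x : X} {A : ι → Set X} (hxA : ∀ j, x ∈ A j) (hxc : ∀ j, x ∈ c (A j))
    (hunion : Pairwise fun j j' => x ∉ c (A j ∪ A j')) : Fintype.card ι ≤ k := by
  obtain ⟨hballot, hiff⟩ := hv
  choose ballot hballot_mem using fun j => (hiff _ _ (hxA j)).mp (hxc j)
  suffices Function.Injective ballot by simpa using Fintype.card_le_of_injective ballot this
  intro j j' hjj'
  by_contra hne
  have hmem : x ∈ v (ballot j) (A j ∪ A j') :=
    (hballot _).axiomGamma (hballot_mem j) (hjj' ▸ hballot_mem j')
  exact hunion hne <| (hiff _ _ (Or.inl (hxA j))).mpr ⟨_, hmem⟩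

theorem le_lib_of_forall_isLiberalRep {X : Type*} {c : Set X → Set X} {n : ℕ}
    (h : ∀ (k : ℕ) (v : Fin k → Set X → Set X), IsLiberalRep c v → n ≤ k) :
    (n : ℕ∞) ≤ lib c := by
  refine le_sInf ?_
  rintro _ ⟨k, v, -, hv, rfl⟩
  exact_mod_cast h k v hv

theorem Finset.card_lt_card_union_of_card_eq {α : Type*} [DecidableEq α] {s t : Finset α}
    (hcard : s.card = t.card) (hne : s ≠ t) : s.card < (s ∪ t).card := by
  refine Finset.card_lt_card ⟨Finset.subset_union_left, fun hsub => hne ?_⟩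
  exact (Finset.eq_of_subset_of_card_le (Finset.subset_union_right.trans hsub) hcard.le).symm

def ballot {X : Type*} (r : X → X → Prop) (A : Set X) : Set X :=
  {a ∈ A | ∀ b ∈ A, ¬ r b a}

theorem freelyRat_ballot {X : Type*} (r : X → X → Prop) : FreelyRat (ballot r) :=
  ⟨r, fun _ => rfl⟩

namespace C15

theorem mem_c15_iff {A : Set (Fin 6)} {x : Fin 6} (hx : x ∈ A) :
    x ∈ c15 A ↔ ¬ (x = 0 ∧ 4 ≤ A.ncard) := by
  unfold c15
  split_ifs with h
  · simp only [Set.mem_sdiff, Set.mem_singleton_iff, hx, true_and]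
    tauto
  · simp only [hx, true_iff]
    rintro ⟨rfl, h4⟩
    exact h ⟨hx, h4⟩

theorem axiomAlpha_c15 : AxiomAlpha c15 := by
  intro A B x hAB hx hxB
  rw [mem_c15_iff hx]
  rw [mem_c15_iff (hAB hx)] at hxB
  rintro ⟨rfl, h4⟩
  exact hxB ⟨rfl, h4.trans (Set.ncard_le_ncard hAB)⟩

def demBallot (i : Fin 5) : Set (Fin 6) → Set (Fin 6) :=
  ballot fun b a => b = i.succ ∧ a = 0

theorem mem_demBallot_iff {A : Set (Fin 6)} {x : Fin 6} (hx : x ∈ A) (i : Fin 5) :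
    x ∈ demBallot i A ↔ x ≠ 0 ∨ i.succ ∉ A := by
  simp only [demBallot, ballot, Set.mem_ofPred_eq, hx, true_and, not_and]
  constructor
  · intro h
    by_contra! hcon
    exact h _ hcon.2 rfl hcon.1
  · rintro h b hb rfl rfl
    tauto

theorem card_demBallot_zero {A : Set (Fin 6)} (h0 : 0 ∈ A) :
    Nat.card {i : Fin 5 // 0 ∈ demBallot i A} = 6 - A.ncard := by
  simp only [mem_demBallot_iff h0, ne_eq, not_true_eq_false, false_or]
  have hsucc : Fin.succ '' {i : Fin 5 | i.succ ∉ A} = Aᶜ := by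
    ext x
    refine ⟨?_, fun hx => ?_⟩
    · rintro ⟨i, hi, rfl⟩
      exact hi
    · obtain ⟨i, rfl⟩ := Fin.exists_succ_eq.mpr (ne_of_mem_of_not_mem h0 hx).symm
      exact ⟨i, hx, rfl⟩
  change Nat.card {i : Fin 5 | i.succ ∉ A} = _
  rw [Nat.card_coe_set_eq, ← Set.ncard_image_of_injective _ (Fin.succ_injective 5), hsucc,
    Set.ncard_compl, Nat.card_eq_fintype_card, Fintype.card_fin]

theorem isDemRep_demBallot : IsDemRep c15 demBallot := by
  refine ⟨fun i => freelyRat_ballot _, fun A x hx => ?_⟩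
  rw [mem_c15_iff hx]
  rcases eq_or_ne x 0 with rfl | hx0
  · have hA : A.ncard ≤ 6 := by simpa using Set.ncard_le_ncard (Set.subset_univ A)
    rw [card_demBallot_zero hx]
    omega
  · have hall (i : Fin 5) : x ∈ demBallot i A := (mem_demBallot_iff hx i).mpr (Or.inl hx0)
    simp [Nat.card_congr (Equiv.subtypeUnivEquiv hall), hx0]

def pairs : Finset (Finset (Fin 6)) :=
  (Finset.univ.erase 0).powersetCard 2

theorem card_pairs : pairs.card = 10 := by
  decide

theorem zero_notMem_of_mem_pairs {s : Finset (Fin 6)} (hs : s ∈ pairs) : 0 ∉ s := fun h0 => by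
  simpa using (Finset.mem_powersetCard.mp hs).1 h0

theorem card_of_mem_pairs {s : Finset (Fin 6)} (hs : s ∈ pairs) : s.card = 2 :=
  (Finset.mem_powersetCard.mp hs).2

theorem ten_le_of_isLiberalRep {k : ℕ} {v : Fin k → Set (Fin 6) → Set (Fin 6)}
    (hv : IsLiberalRep c15 v) : 10 ≤ k := by
  have hmenu (s : Finset (Fin 6)) : (0 : Fin 6) ∈ (↑(insert 0 s) : Set (Fin 6)) := by simp
  rw [← card_pairs, ← Fintype.card_coe]
  refine hv.card_le (A := fun s : pairs => ↑(insert 0 s.1)) (fun s => hmenu s) ?_ ?_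
  · rintro ⟨s, hs⟩
    rw [mem_c15_iff (hmenu s), Set.ncard_coe_finset,
      Finset.card_insert_of_notMem (zero_notMem_of_mem_pairs hs), card_of_mem_pairs hs]
    omega
  · rintro ⟨s, hs⟩ ⟨t, ht⟩ hst
    have hne : s ≠ t := fun h => hst (Subtype.ext h)
    have h0 : (0 : Fin 6) ∉ s ∪ t := by
      simp [zero_notMem_of_mem_pairs hs, zero_notMem_of_mem_pairs ht]
    have hcard : 2 < (s ∪ t).card := card_of_mem_pairs hs ▸
      Finset.card_lt_card_union_of_card_eq
        ((card_of_mem_pairs hs).trans (card_of_mem_pairs ht).symm) hne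
    change 0 ∉ c15 (↑(insert 0 s) ∪ ↑(insert 0 t))
    rw [← Finset.coe_union, ← Finset.insert_union_distrib, mem_c15_iff (hmenu _),
      Set.ncard_coe_finset, Finset.card_insert_of_notMem h0]
    omega

end C15

theorem stmt15 : AxiomAlpha c15 ∧ dem c15 ≤ 5 ∧ 10 ≤ lib c15 :=
  ⟨C15.axiomAlpha_c15, dem_le_of_isDemRep (by norm_num) C15.isDemRep_demBallot,
    le_lib_of_forall_isLiberalRep fun _ _ => C15.ten_le_of_isLiberalRep⟩
end
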